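/- Suppose ρ : D → ℝ ∪ {−∞} is a fixed point of the upper-concave-envelope operation in each coordinate direction (i.e., for each k, ρ is already concave in the k-th marginal with others fixed) and ρ ≥ ρ_0 pointwise. Define ρ_0^k := ρ_0 and recursively ρ_t^k := (coordinate-(k)-wise concave envelope of ρ_{t−1}^{k⁺}), where k⁺ cycles through {1,…,m}. Then for every t and every k, ρ_t^k ≤ ρ pointwise. -/

import Mathlib

/-- A pmf on a finite alphabet. -/
def IsPmf {γ : Type} [Fintype γ] (q : γ → ℝ) : Prop :=
  (∀ x, 0 ≤ q x) ∧ ∑ x, q x = 1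

/-- The coordinate-`k` upper concave envelope of `g` at the tuple of marginals `p`:
`sup { Σ_i λ_i g(q_i ⊗ p_{-k}) : λ_i ≥ 0, Σ λ_i = 1, q_i pmfs on X_k, Σ λ_i q_i = p_k }`. -/
noncomputable def coordEnv {m : ℕ} (α : Fin m → Type) [∀ j, Fintype (α j)] (k : Fin m)
    (g : (∀ j, α j → ℝ) → EReal) (p : ∀ j, α j → ℝ) : EReal :=
  sSup {y | ∃ (n : ℕ) (lam : Fin n → ℝ) (q : Fin n → (α k → ℝ)),
    (∀ i, 0 ≤ lam i) ∧ (∑ i, lam i = 1) ∧ (∀ i, IsPmf (q i)) ∧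
    (∑ i, lam i • q i) = p k ∧
    y = ∑ i, (lam i : EReal) * g (Function.update p k (q i))}

theorem isPmf_update {ι : Type*} [DecidableEq ι] {α : ι → Type} [∀ j, Fintype (α j)]
    {p : ∀ j, α j → ℝ} (hp : ∀ j, IsPmf (p j)) {k : ι} {q : α k → ℝ} (hq : IsPmf q) (j : ι) :
    IsPmf (Function.update p k q j) := by
  rcases eq_or_ne j k with rfl | hjk
  · simpa using hq
  · simpa [Function.update_of_ne hjk] using hp j

theorem coordEnv_mono {m : ℕ} (α : Fin m → Type) [∀ j, Fintype (α j)] (k : Fin m)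
    {g h : (∀ j, α j → ℝ) → EReal} (hgh : ∀ p : ∀ j, α j → ℝ, (∀ j, IsPmf (p j)) → g p ≤ h p)
    {p : ∀ j, α j → ℝ} (hp : ∀ j, IsPmf (p j)) :
    coordEnv α k g p ≤ coordEnv α k h p := by
  refine sSup_le ?_
  rintro _ ⟨n, lam, q, hlam, hsum, hq, hmix, rfl⟩
  refine le_sSup_of_le ⟨n, lam, q, hlam, hsum, hq, hmix, rfl⟩ ?_
  gcongr with i
  · exact_mod_cast hlam i
  · exact hgh _ (isPmf_update hp (hq i))

/-- If `ρ` majorizes `ρ₀` and is a fixed point of the coordinate-wise upper-concave-envelope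
operation in every coordinate (i.e. is concave in each marginal with the others fixed), then
every iterate `ρ_t` of the algorithm — starting from `ρ₀` and applying the coordinate-wise
concave envelope along any cycling sequence of coordinates — satisfies `ρ_t ≤ ρ` pointwise
on product pmfs. -/
theorem stmt13 {m : ℕ} (α : Fin m → Type) [∀ j, Fintype (α j)]
    (ρ0 ρ : (∀ j, α j → ℝ) → EReal)
    (hmaj : ∀ p : ∀ j, α j → ℝ, (∀ j, IsPmf (p j)) → ρ0 p ≤ ρ p)
    (hfix : ∀ (k : Fin m) (p : ∀ j, α j → ℝ), (∀ j, IsPmf (p j)) →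
      coordEnv α k ρ p = ρ p)
    (ks : ℕ → Fin m) (seq : ℕ → (∀ j, α j → ℝ) → EReal)
    (h0 : seq 0 = ρ0)
    (hrec : ∀ t p, seq (t + 1) p = coordEnv α (ks t) (seq t) p) :
    ∀ (t : ℕ) (p : ∀ j, α j → ℝ), (∀ j, IsPmf (p j)) → seq t p ≤ ρ p := by
  intro t
  induction t with
  | zero => intro p hp; rw [h0]; exact hmaj p hp
  | succ t ih =>
    intro p hp
    rw [hrec, ← hfix (ks t) p hp]
    exact coordEnv_mono α (ks t) ih hp
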